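/- arXiv:2206.11373 — 2 statements merged into one kernel-verified Lean document; each statement's English description precedes it below -/
import Mathlib

section
/- Let X be a real Hilbert space, let A be a nonempty closed affine subspace of X with parallel subspace U := A − A, let B := {x ∈ X : ⟨x, v⟩ = β} be a hyperplane with ‖v‖ = 1, and let g := P_{B−A}(0). Suppose P_U(v) = 0 and let x ∈ X. If P_A(x) ∈ B, then g = 0, A ∩ B ≠ ∅, and P_{A∩B}(x) = P_A(x). -/
/-!
Since `P_A x` already lies in `B`, it is a point of `A ∩ B` that is nearest to `x` among all
points of the larger set `A`, hence among the points of `A ∩ B`; nearest points in convex sets of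
an inner product space are unique, so `P_{A∩B} x = P_A x`. The same point witnesses
`0 = P_A x - P_A x ∈ B - A`, and the projection of a point of a set onto that set is the point
itself, so `g = 0`.
-/

open RealInnerProductSpace Pointwise

/-- The metric (nearest-point) projection onto a set `C` in a real inner product space:
`metricProj C x` is a point of `C` minimizing the distance to `x` (when such a point exists;
for a nonempty closed convex set in a Hilbert space it exists and is unique). -/
noncomputable def metricProj {X : Type*} [NormedAddCommGroup X] [InnerProductSpace ℝ X]
    (C : Set X) (x : X) : X :=
  letI := Classical.dec (∃ p ∈ C, ∀ q ∈ C, ‖x - p‖ ≤ ‖x - q‖)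
  if h : ∃ p ∈ C, ∀ q ∈ C, ‖x - p‖ ≤ ‖x - q‖ then h.choose else 0

section MetricProj

variable {X : Type*} [NormedAddCommGroup X] [InnerProductSpace ℝ X] {C D : Set X} {x p : X}

lemma metricProj_spec (h : ∃ p ∈ C, ∀ q ∈ C, ‖x - p‖ ≤ ‖x - q‖) :
    metricProj C x ∈ C ∧ ∀ q ∈ C, ‖x - metricProj C x‖ ≤ ‖x - q‖ := by
  rw [metricProj, dif_pos h]
  exact h.choose_spec

lemma exists_forall_norm_sub_le [CompleteSpace X] (hne : C.Nonempty) (hC : IsClosed C)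
    (hconv : Convex ℝ C) (x : X) : ∃ p ∈ C, ∀ q ∈ C, ‖x - p‖ ≤ ‖x - q‖ := by
  obtain ⟨p, hp, hinf⟩ := exists_norm_eq_iInf_of_complete_convex hne hC.isComplete hconv x
  refine ⟨p, hp, fun q hq => hinf ▸ ?_⟩
  exact ciInf_le ⟨0, fun _ ⟨_, hw⟩ => hw ▸ norm_nonneg _⟩ (⟨q, hq⟩ : C)

lemma eq_of_forall_norm_sub_le (hC : Convex ℝ C) {q : X} (hp : p ∈ C) (hq : q ∈ C)
    (hpmin : ∀ w ∈ C, ‖x - p‖ ≤ ‖x - w‖) (hqmin : ∀ w ∈ C, ‖x - q‖ ≤ ‖x - w‖) : p = q := by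
  have hmid : ‖x - p‖ ≤ ‖x - midpoint ℝ p q‖ :=
    hpmin _ (hC.segment_subset hp hq (midpoint_mem_segment p q))
  -- parallelogram law: `‖(x-p) - (x-q)‖² = 4 (‖x-p‖² - ‖x - midpoint p q‖²)` when `‖x-p‖ = ‖x-q‖`
  have hpar := parallelogram_law_with_norm ℝ (x - p) (x - q)
  have hsum : x - p + (x - q) = (2 : ℝ) • (x - midpoint ℝ p q) := by
    rw [midpoint_eq_smul_add, invOf_eq_inv]; module
  rw [hsum, norm_smul, Real.norm_ofNat, sub_sub_sub_cancel_left] at hpar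
  have hpq : ‖q - p‖ = 0 := by
    nlinarith [hpmin q hq, hqmin p hp, norm_nonneg (q - p), norm_nonneg (x - p),
      norm_nonneg (x - q)]
  exact (sub_eq_zero.mp (norm_eq_zero.mp hpq)).symm

lemma metricProj_eq_self_of_mem (hx : x ∈ C) : metricProj C x = x := by
  have hle := (metricProj_spec (x := x) ⟨x, hx, fun q _ => by simp⟩).2 x hx
  rw [sub_self, norm_zero] at hle
  exact (sub_eq_zero.mp (norm_le_zero_iff.mp hle)).symm

lemma metricProj_eq_of_forall_norm_sub_le (hC : Convex ℝ C) (hp : p ∈ C)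
    (hpmin : ∀ q ∈ C, ‖x - p‖ ≤ ‖x - q‖) : metricProj C x = p :=
  have hspec := metricProj_spec ⟨p, hp, hpmin⟩
  eq_of_forall_norm_sub_le hC hspec.1 hp hspec.2 hpmin

lemma metricProj_inter_eq_of_metricProj_mem (hCD : Convex ℝ (C ∩ D))
    (hex : ∃ p ∈ C, ∀ q ∈ C, ‖x - p‖ ≤ ‖x - q‖) (hD : metricProj C x ∈ D) :
    metricProj (C ∩ D) x = metricProj C x :=
  have hspec := metricProj_spec hex
  metricProj_eq_of_forall_norm_sub_le hCD ⟨hspec.1, hD⟩ fun q hq => hspec.2 q hq.1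

end MetricProj

lemma convex_setOf_inner_eq {X : Type*} [NormedAddCommGroup X] [InnerProductSpace ℝ X]
    (v : X) (β : ℝ) : Convex ℝ {y : X | ⟪y, v⟫ = β} :=
  convex_hyperplane ⟨fun a b => inner_add_left a b v, fun c a => real_inner_smul_left a v c⟩ β

theorem gap_eq_zero_and_proj_inter_of_projDir_eq_zero_of_projA_mem_general
    {X : Type*} [NormedAddCommGroup X] [InnerProductSpace ℝ X] [CompleteSpace X]
    (A : AffineSubspace ℝ X) (hA : (A : Set X).Nonempty) (hAc : IsClosed (A : Set X))
    (v : X) (β : ℝ) (B : Set X) (hB : B = {y : X | ⟪y, v⟫ = β})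
    (g : X) (hg : g = metricProj (B - (A : Set X)) 0)
    (x : X) (hx : metricProj (A : Set X) x ∈ B) :
    g = 0 ∧ ((A : Set X) ∩ B).Nonempty ∧
      metricProj ((A : Set X) ∩ B) x = metricProj (A : Set X) x := by
  have hex := exists_forall_norm_sub_le hA hAc A.convex x
  have hpA : metricProj (A : Set X) x ∈ (A : Set X) := (metricProj_spec hex).1
  have hgap : (0 : X) ∈ B - (A : Set X) := ⟨_, hx, _, hpA, sub_self _⟩
  have hAB : Convex ℝ ((A : Set X) ∩ B) := A.convex.inter (hB ▸ convex_setOf_inner_eq v β)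
  exact ⟨hg ▸ metricProj_eq_self_of_mem hgap, ⟨_, hpA, hx⟩,
    metricProj_inter_eq_of_metricProj_mem hAB hex hx⟩

theorem gap_eq_zero_and_proj_inter_of_projDir_eq_zero_of_projA_mem
    {X : Type*} [NormedAddCommGroup X] [InnerProductSpace ℝ X] [CompleteSpace X]
    (A : AffineSubspace ℝ X) (hA : (A : Set X).Nonempty) (hAc : IsClosed (A : Set X))
    (v : X) (hv : ‖v‖ = 1) (β : ℝ) (B : Set X) (hB : B = {y : X | ⟪y, v⟫ = β})
    (g : X) (hg : g = metricProj (B - (A : Set X)) 0)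
    (hPU : metricProj (A.direction : Set X) v = 0)
    (x : X) (hx : metricProj (A : Set X) x ∈ B) :
    g = 0 ∧ ((A : Set X) ∩ B).Nonempty ∧
      metricProj ((A : Set X) ∩ B) x = metricProj (A : Set X) x :=
  gap_eq_zero_and_proj_inter_of_projDir_eq_zero_of_projA_mem_general A hA hAc v β B hB g hg x hx
end

section
/- Let X be a real Hilbert space, let A be a nonempty closed affine subspace of X with parallel subspace U := A − A, let B := {x ∈ X : ⟨x, v⟩ = β} be a hyperplane with ‖v‖ = 1, let g := P_{B−A}(0), and let E := A ∩ (B − g). Suppose P_U(v) = 0 and let x ∈ X. If P_A(x) ∉ B, then g ≠ 0, A ∩ B = ∅, and P_E(x) = P_A(x). -/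
open RealInnerProductSpace Pointwise

lemma metricProj_spec_s5 {X : Type*} [NormedAddCommGroup X] [InnerProductSpace ℝ X]
    [CompleteSpace X] {C : Set X} (hne : C.Nonempty) (hc : IsClosed C) (hconv : Convex ℝ C)
    (x : X) : metricProj C x ∈ C ∧ ∀ q ∈ C, ‖x - metricProj C x‖ ≤ ‖x - q‖ := by
  have h : ∃ p ∈ C, ∀ q ∈ C, ‖x - p‖ ≤ ‖x - q‖ := by
    obtain ⟨p, hpC, hp⟩ := exists_norm_eq_iInf_of_complete_convex hne hc.isComplete hconv x
    refine ⟨p, hpC, fun q hq => ?_⟩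
    rw [hp]
    exact ciInf_le ⟨0, by rintro r ⟨w, rfl⟩; positivity⟩ (⟨q, hq⟩ : C)
  unfold metricProj
  rw [dif_pos h]
  exact ⟨h.choose_spec.1, h.choose_spec.2⟩

theorem gap_ne_zero_and_proj_genInter_of_projDir_eq_zero_of_projA_not_mem
    {X : Type*} [NormedAddCommGroup X] [InnerProductSpace ℝ X] [CompleteSpace X]
    (A : AffineSubspace ℝ X) (hA : (A : Set X).Nonempty) (hAc : IsClosed (A : Set X))
    (v : X) (hv : ‖v‖ = 1) (β : ℝ) (B : Set X) (hB : B = {y : X | ⟪y, v⟫ = β})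
    (g : X) (hg : g = metricProj (B - (A : Set X)) 0)
    (E : Set X) (hE : E = (A : Set X) ∩ ((fun y => y - g) '' B))
    (hPU : metricProj (A.direction : Set X) v = 0)
    (x : X) (hx : metricProj (A : Set X) x ∉ B) :
    g ≠ 0 ∧ (A : Set X) ∩ B = ∅ ∧ metricProj E x = metricProj (A : Set X) x := by
  obtain ⟨a₀, ha₀⟩ := hA
  set α : ℝ := ⟪a₀, v⟫ with hα
  have hUc : IsClosed (A.direction : Set X) := A.isClosed_direction_iff.mpr hAc
  -- v is orthogonal to the direction
  have hperp : ∀ u ∈ A.direction, ⟪v, u⟫ = 0 := by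
    have hspec := metricProj_spec_s5 ⟨0, A.direction.zero_mem⟩ hUc A.direction.convex v
    rw [hPU] at hspec
    have hmin : ‖v - 0‖ = ⨅ w : (A.direction : Set X), ‖v - w‖ := by
      refine le_antisymm ?_ ?_
      · exact le_ciInf fun ⟨w, hw⟩ => hspec.2 w hw
      · exact ciInf_le ⟨0, by rintro r ⟨w, rfl⟩; positivity⟩
          (⟨0, A.direction.zero_mem⟩ : (A.direction : Set X))
    have := (Submodule.norm_eq_iInf_iff_real_inner_eq_zero A.direction A.direction.zero_mem).1 hmin
    simpa using this
  -- every point of A pairs to α with v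
  have hAα : ∀ a ∈ A, ⟪a, v⟫ = α := by
    intro a ha
    have h1 : ⟪v, a - a₀⟫ = 0 := hperp _ (AffineSubspace.vsub_mem_direction ha ha₀)
    rw [real_inner_comm] at h1
    rw [inner_sub_left] at h1
    linarith
  -- projection onto A
  have hPA := metricProj_spec_s5 ⟨a₀, ha₀⟩ hAc A.convex x
  have hPAα : ⟪metricProj (A : Set X) x, v⟫ = α := hAα _ hPA.1
  have hαβ : α ≠ β := by
    intro h
    exact hx (by rw [hB]; simpa [h] using hPAα)
  -- B - A is the hyperplane at level β - α
  have hBA : B - (A : Set X) = {y : X | ⟪y, v⟫ = β - α} := by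
    ext z
    constructor
    · rintro ⟨b, hb, a, ha, rfl⟩
      have hbβ : ⟪b, v⟫ = β := by rw [hB] at hb; exact hb
      simp only [Set.mem_setOf_eq, inner_sub_left, hbβ, hAα a ha]
    · intro hz
      refine ⟨z + a₀, ?_, a₀, ha₀, add_sub_cancel_right z a₀⟩
      rw [hB]
      simp only [Set.mem_setOf_eq, inner_add_left]
      have : ⟪z, v⟫ = β - α := hz
      rw [this]; ring
  -- the hyperplane is nonempty closed convex
  have hhyp : ∀ c : ℝ, ({y : X | ⟪y, v⟫ = c}).Nonempty ∧ IsClosed {y : X | ⟪y, v⟫ = c} ∧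
      Convex ℝ {y : X | ⟪y, v⟫ = c} := by
    intro c
    refine ⟨⟨c • v, ?_⟩, ?_, ?_⟩
    · simp only [Set.mem_setOf_eq, real_inner_smul_left, real_inner_self_eq_norm_sq, hv]
      ring
    · exact isClosed_eq (Continuous.inner continuous_id continuous_const) continuous_const
    · intro p hp q hq s t hs ht hst
      simp only [Set.mem_setOf_eq] at hp hq ⊢
      simp only [inner_add_left, real_inner_smul_left, hp, hq]
      linear_combination c * hst
  have hgmem : g ∈ B - (A : Set X) := by
    obtain ⟨hne, hc, hcv⟩ := hhyp (β - α)
    rw [hg]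
    exact (metricProj_spec_s5 (hBA ▸ hne) (hBA ▸ hc) (hBA ▸ hcv) 0).1
  have hgv : ⟪g, v⟫ = β - α := by rw [hBA] at hgmem; exact hgmem
  refine ⟨?_, ?_, ?_⟩
  · intro h
    rw [h, inner_zero_left] at hgv
    exact hαβ (by linarith)
  · ext a
    simp only [Set.mem_inter_iff, Set.mem_empty_iff_false, iff_false, not_and]
    intro ha hab
    rw [hB] at hab
    exact hαβ ((hAα a ha).symm.trans hab)
  · have hEA : E = (A : Set X) := by
      rw [hE]
      refine Set.inter_eq_left.mpr fun a ha => ?_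
      refine ⟨a + g, ?_, add_sub_cancel_right a g⟩
      rw [hB]
      simp only [Set.mem_setOf_eq, inner_add_left, hAα a ha, hgv]
      ring
    rw [hEA]
end
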